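/- arXiv:1705.08565 — 3 statements merged into one kernel-verified Lean document; each statement's English description precedes it below -/
import Mathlib

section
/- Let D be a triangulated category, f, g morphisms in D, and f' a retract of f in the arrow category (i.e., there are morphisms i : f' → f and p : f → f' in D² with p ∘ i = id_{f'}). If f ⊥ g (homotopy orthogonality) then f' ⊥ g. -/
/-!
Cones are not functorial, but the retraction `(p₀, p₁)` extends to a morphism of triangles
`q : C_f ⟶ C_f'`, and `i₁ ≫ p₁ = 𝟙` gives `α' = i₁ ≫ α ≫ q`. So (HO1) for `f'` is (HO1) for `f`
precomposed with `i₁`, and a map `x` killed by the (HO2)-map of `f'` has `q ≫ x` killed by that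
of `f`, hence `q ≫ x = 0` and `α' ≫ x = 0`. Then `x = β' ≫ θ`, and `θ = i₀⟦1⟧' ≫ p₀⟦1⟧' ≫ θ`
where `p₀⟦1⟧' ≫ θ` factors through `f⟦1⟧'` because `β ≫ p₀⟦1⟧' ≫ θ = q ≫ x = 0`; since
`i₀ ≫ f = f' ≫ i₁`, `x` factors through `β' ≫ f'⟦1⟧' = 0`.
-/

open CategoryTheory Category Limits Pretriangulated ZeroObject

universe v u w

section Defs

variable {D : Type u} [Category.{v} D] [HasZeroObject D] [Preadditive D]
  [HasShift D ℤ] [∀ n : ℤ, (shiftFunctor D n).Additive] [Pretriangulated D]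

/-- Homotopy orthogonality (Def. 1.1): conditions (HO1) and (HO2), stated for every
completion of `e` and `m` to distinguished triangles. -/
def HOrth {E₀ E₁ M₀ M₁ : D} (e : E₀ ⟶ E₁) (m : M₀ ⟶ M₁) : Prop :=
  ∀ (Ce : D) (αe : E₁ ⟶ Ce) (βe : Ce ⟶ E₀⟦(1:ℤ)⟧),
    Triangle.mk e αe βe ∈ (distTriang D) →
    ∀ (Cm : D) (αm : M₁ ⟶ Cm) (βm : Cm ⟶ M₀⟦(1:ℤ)⟧),
      Triangle.mk m αm βm ∈ (distTriang D) →
      (∀ φ : Ce ⟶ Cm⟦(-1:ℤ)⟧,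
        αe ≫ φ ≫ βm⟦(-1:ℤ)⟧' ≫
          (shiftFunctorCompIsoId D (1:ℤ) (-1:ℤ) (by omega)).hom.app M₀ = 0) ∧
      Function.Injective (fun φ : Ce ⟶ Cm => αe ≫ φ ≫ βm)

/-- The right homotopy-orthogonal class `E^⊥`. -/
def rightOrth (E : MorphismProperty D) : MorphismProperty D :=
  fun _ _ m => ∀ ⦃A B : D⦄ (e : A ⟶ B), E e → HOrth e m

/-- The left homotopy-orthogonal class `^⊥M`. -/
def leftOrth (M : MorphismProperty D) : MorphismProperty D :=
  fun _ _ e => ∀ ⦃A B : D⦄ (m : A ⟶ B), M m → HOrth e m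

/-- The 3-for-2 property for a class of morphisms. -/
def ThreeForTwo (P : MorphismProperty D) : Prop :=
  ∀ ⦃X Y Z : D⦄ (f : X ⟶ Y) (g : Y ⟶ Z),
    (P f → P g → P (f ≫ g)) ∧ (P f → P (f ≫ g) → P g) ∧ (P g → P (f ≫ g) → P f)

/-- A triangulated pre-factorization system (Def. 1.12(1)). -/
structure IsTriPFS (E M : MorphismProperty D) : Prop where
  right_eq : rightOrth E = M
  left_eq : leftOrth M = E
  shiftE : ∀ ⦃X Y : D⦄ (f : X ⟶ Y), E f → E (f⟦(1:ℤ)⟧')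

/-- A triangulated factorization system (Def. 1.12(2)). -/
structure IsTriFS (E M : MorphismProperty D) extends IsTriPFS E M : Prop where
  fact : ∀ ⦃X Y : D⦄ (f : X ⟶ Y),
    ∃ (P : D) (e : X ⟶ P) (m : P ⟶ Y), E e ∧ M m ∧ e ≫ m = f

/-- A normal triangulated torsion theory (Defs. 1.15, 1.16). -/
structure IsNormalTTT (E M : MorphismProperty D) extends IsTriFS E M : Prop where
  three_E : ThreeForTwo E
  three_M : ThreeForTwo M
  normal : ∀ ⦃X T : D⦄ (e : X ⟶ T) (m : T ⟶ (0:D)), E e → M m →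
    ∀ ⦃R : D⦄ (r : R ⟶ X) (δ : T ⟶ R⟦(1:ℤ)⟧),
      Triangle.mk r e δ ∈ (distTriang D) → E (0 : R ⟶ (0:D))

/-- A middling good morphism of triangles (Neeman): one extending to a 3×3 diagram
whose rows and columns are distinguished triangles, all squares commuting except
the lower-right one, which anticommutes. -/
def MiddlingGood {A₀ B₀ C₀ A₁ B₁ C₁ : D}
    (φ₀ : A₀ ⟶ B₀) (ψ₀ : B₀ ⟶ C₀) (δ₀ : C₀ ⟶ A₀⟦(1:ℤ)⟧)
    (φ₁ : A₁ ⟶ B₁) (ψ₁ : B₁ ⟶ C₁) (δ₁ : C₁ ⟶ A₁⟦(1:ℤ)⟧)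
    (a : A₀ ⟶ A₁) (b : B₀ ⟶ B₁) (c : C₀ ⟶ C₁) : Prop :=
  ∃ (Ca Cb Cc : D)
    (αa : A₁ ⟶ Ca) (βa : Ca ⟶ A₀⟦(1:ℤ)⟧)
    (αb : B₁ ⟶ Cb) (βb : Cb ⟶ B₀⟦(1:ℤ)⟧)
    (αc : C₁ ⟶ Cc) (βc : Cc ⟶ C₀⟦(1:ℤ)⟧)
    (fa : Ca ⟶ Cb) (fb : Cb ⟶ Cc) (δ : Cc ⟶ Ca⟦(1:ℤ)⟧),
    Triangle.mk a αa βa ∈ (distTriang D) ∧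
    Triangle.mk b αb βb ∈ (distTriang D) ∧
    Triangle.mk c αc βc ∈ (distTriang D) ∧
    Triangle.mk fa fb δ ∈ (distTriang D) ∧
    φ₁ ≫ αb = αa ≫ fa ∧
    ψ₁ ≫ αc = αb ≫ fb ∧
    δ₁ ≫ αa⟦(1:ℤ)⟧' = αc ≫ δ ∧
    βa ≫ φ₀⟦(1:ℤ)⟧' = fa ≫ βb ∧
    βb ≫ ψ₀⟦(1:ℤ)⟧' = fb ≫ βc ∧
    δ ≫ βa⟦(1:ℤ)⟧' = -(βc ≫ δ₀⟦(1:ℤ)⟧')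

end Defs

/-- A t-structure on a triangulated category (Def. 2.1), together with choices of the
truncation functors `τ^{≤0}` (right adjoint to the inclusion of `D^{≤0}`) and
`τ^{≥1}` (left adjoint to the inclusion of `D^{≥1}`).  Here `ge` is `D^{≥0}` and
membership of `X` in `D^{≥1} = Σ⁻¹ D^{≥0}` is expressed as `X⟦1⟧ ∈ ge`. -/
structure TData (D : Type u) [Category.{v} D] [HasZeroObject D] [Preadditive D]
    [HasShift D ℤ] [∀ n : ℤ, (shiftFunctor D n).Additive] [Pretriangulated D] where
  le : Set D
  ge : Set D
  le_iso : ∀ ⦃X Y : D⦄, (X ≅ Y) → X ∈ le → Y ∈ le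
  ge_iso : ∀ ⦃X Y : D⦄, (X ≅ Y) → X ∈ ge → Y ∈ ge
  shift_le : ∀ ⦃X : D⦄, X ∈ le → X⟦(1:ℤ)⟧ ∈ le
  shift_ge : ∀ ⦃X : D⦄, X⟦(1:ℤ)⟧ ∈ ge → X ∈ ge
  hom_zero : ∀ ⦃X Y : D⦄ (f : X ⟶ Y), X ∈ le → Y⟦(1:ℤ)⟧ ∈ ge → f = 0
  tri : ∀ X : D, ∃ (A B : D) (i : A ⟶ X) (p : X ⟶ B) (δ : B ⟶ A⟦(1:ℤ)⟧),
    A ∈ le ∧ B⟦(1:ℤ)⟧ ∈ ge ∧ Triangle.mk i p δ ∈ (distTriang D)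
  tle : D ⥤ D
  σ : tle ⟶ 𝟭 D
  tle_mem : ∀ X : D, tle.obj X ∈ le
  tle_univ : ∀ ⦃A : D⦄, A ∈ le → ∀ X : D,
    Function.Bijective (fun g : A ⟶ tle.obj X => g ≫ σ.app X)
  tge : D ⥤ D
  ρ : 𝟭 D ⟶ tge
  tge_mem : ∀ X : D, (tge.obj X)⟦(1:ℤ)⟧ ∈ ge
  tge_univ : ∀ X : D, ∀ ⦃B : D⦄, B⟦(1:ℤ)⟧ ∈ ge →
    Function.Bijective (fun g : tge.obj X ⟶ B => ρ.app X ≫ g)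

section TDefs

variable {D : Type u} [Category.{v} D] [HasZeroObject D] [Preadditive D]
  [HasShift D ℤ] [∀ n : ℤ, (shiftFunctor D n).Additive] [Pretriangulated D]

/-- `E_t`: morphisms `φ` with `τ^{≥1} φ` invertible. -/
def Et (t : TData D) : MorphismProperty D := fun _ _ φ => IsIso (t.tge.map φ)

/-- `M_t`: morphisms `φ` with `τ^{≤0} φ` invertible. -/
def Mt (t : TData D) : MorphismProperty D := fun _ _ φ => IsIso (t.tle.map φ)

end TDefs

section Retract

variable {D : Type u} [Category.{v} D] [Preadditive D]

lemma injective_comp_comp_iff {W X Y Z : D} (a : W ⟶ X) (b : Y ⟶ Z) :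
    Function.Injective (fun x : X ⟶ Y => a ≫ x ≫ b) ↔ ∀ x : X ⟶ Y, a ≫ x ≫ b = 0 → x = 0 :=
  injective_iff_map_eq_zero ((Preadditive.leftComp Z a).comp (Preadditive.rightComp X b))

variable [HasZeroObject D] [HasShift D ℤ] [∀ n : ℤ, (shiftFunctor D n).Additive]
  [Pretriangulated D]

lemma eq_zero_of_comp_eq_zero_of_retract {F₀ F₁ F₀' F₁' C C' X : D}
    {f : F₀ ⟶ F₁} {f' : F₀' ⟶ F₁'} {i₀ : F₀' ⟶ F₀} {i₁ : F₁' ⟶ F₁} {p₀ : F₀ ⟶ F₀'}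
    (hi : i₀ ≫ f = f' ≫ i₁) (hr₀ : i₀ ≫ p₀ = 𝟙 F₀')
    {α : F₁ ⟶ C} {β : C ⟶ F₀⟦(1:ℤ)⟧} (hT : Triangle.mk f α β ∈ distTriang D)
    {α' : F₁' ⟶ C'} {β' : C' ⟶ F₀'⟦(1:ℤ)⟧} (hT' : Triangle.mk f' α' β' ∈ distTriang D)
    {q : C ⟶ C'} (hq : β ≫ p₀⟦(1:ℤ)⟧' = q ≫ β')
    {x : C' ⟶ X} (hα'x : α' ≫ x = 0) (hqx : q ≫ x = 0) : x = 0 := by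
  obtain ⟨θ, rfl⟩ : ∃ θ : F₀'⟦(1:ℤ)⟧ ⟶ X, x = β' ≫ θ :=
    Triangle.yoneda_exact₃ _ hT' x hα'x
  obtain ⟨χ, hχ⟩ : ∃ χ : F₁⟦(1:ℤ)⟧ ⟶ X, p₀⟦(1:ℤ)⟧' ≫ θ = (-f⟦(1:ℤ)⟧') ≫ χ :=
    Triangle.yoneda_exact₃ _ (rot_of_distTriang _ hT) _
      (show β ≫ p₀⟦(1:ℤ)⟧' ≫ θ = 0 by rw [reassoc_of% hq]; exact hqx)
  calc β' ≫ θ = β' ≫ (i₀ ≫ p₀)⟦(1:ℤ)⟧' ≫ θ := by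
        rw [hr₀, CategoryTheory.Functor.map_id, id_comp]
    _ = -(β' ≫ (i₀ ≫ f)⟦(1:ℤ)⟧' ≫ χ) := by
        simp only [Functor.map_comp, assoc, hχ, Preadditive.neg_comp, Preadditive.comp_neg]
    _ = -((β' ≫ f'⟦(1:ℤ)⟧') ≫ i₁⟦(1:ℤ)⟧' ≫ χ) := by
        rw [hi, Functor.map_comp, assoc, assoc]
    _ = 0 := by
        have hβ'f' : β' ≫ f'⟦(1:ℤ)⟧' = 0 := comp_distTriang_mor_zero₃₁ _ hT'
        rw [hβ'f', zero_comp, neg_zero]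

end Retract

section Statements

variable {D : Type u} [Category.{v} D] [HasZeroObject D] [Preadditive D]
  [HasShift D ℤ] [∀ n : ℤ, (shiftFunctor D n).Additive] [Pretriangulated D]

/-- Homotopy orthogonality on the left is stable under retracts (Lemma 1.7). -/
theorem homotopy_orthogonal_of_retract {F₀ F₁ F₀' F₁' G₀ G₁ : D}
    (f : F₀ ⟶ F₁) (f' : F₀' ⟶ F₁') (g : G₀ ⟶ G₁)
    (i₀ : F₀' ⟶ F₀) (i₁ : F₁' ⟶ F₁) (p₀ : F₀ ⟶ F₀') (p₁ : F₁ ⟶ F₁')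
    (hi : i₀ ≫ f = f' ≫ i₁) (hp : p₀ ≫ f' = f ≫ p₁)
    (hr₀ : i₀ ≫ p₀ = 𝟙 F₀') (hr₁ : i₁ ≫ p₁ = 𝟙 F₁')
    (h : HOrth f g) : HOrth f' g := by
  intro C' α' β' hT' Cm αm βm hTm
  obtain ⟨C, α, β, hT⟩ := distinguished_cocone_triangle f
  obtain ⟨ho₁, ho₂⟩ := h C α β hT Cm αm βm hTm
  obtain ⟨q, hq₁, hq₂⟩ : ∃ q : C ⟶ C', α ≫ q = p₁ ≫ α' ∧ β ≫ p₀⟦(1:ℤ)⟧' = q ≫ β' :=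
    complete_distinguished_triangle_morphism _ _ hT hT' p₀ p₁ hp.symm
  have hα' : α' = i₁ ≫ α ≫ q := by
    rw [hq₁, reassoc_of% hr₁]
  refine ⟨fun φ => ?_, (injective_comp_comp_iff _ _).2 fun x hx => ?_⟩
  · rw [hα']
    simpa only [assoc, comp_zero] using i₁ ≫= ho₁ (q ≫ φ)
  · have hqx : q ≫ x = 0 := (injective_comp_comp_iff _ _).1 ho₂ _ (by
      simpa only [assoc, comp_zero, reassoc_of% hq₁] using p₁ ≫= hx)
    refine eq_zero_of_comp_eq_zero_of_retract hi hr₀ hT hT' hq₂ ?_ hqx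
    rw [hα', assoc, assoc, hqx, comp_zero, comp_zero]

end Statements
end

section
/- Let D be a triangulated category and (E, M) a triangulated pre-factorization system (i.e., E^⊥ = M and ^⊥M = E for homotopy orthogonality, and E is closed under Σ). Then E ∩ M is exactly the class of isomorphisms of D. -/
open CategoryTheory Category Limits Pretriangulated ZeroObject

universe v u w

/-! An isomorphism has zero cone, so (HO1) and (HO2) hold for it trivially on either side;
hence it lies in `^⊥M = E` and in `E^⊥ = M`. Conversely, a morphism `f` in `E ∩ M` satisfies
`f ⊥ f`. With `C` its cone, (HO2) says `φ ↦ α ≫ φ ≫ β` is injective on `C ⟶ C`; since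
`α ≫ β = 0`, it identifies `𝟙 C` with `0`, so `C` is zero and `f` is invertible. -/

section HomotopyOrthogonality

variable {D : Type u} [Category.{v} D] [HasZeroObject D] [Preadditive D]
  [HasShift D ℤ] [∀ n : ℤ, (shiftFunctor D n).Additive] [Pretriangulated D]

lemma HOrth.of_isIso_left {E₀ E₁ M₀ M₁ : D} (e : E₀ ⟶ E₁) [IsIso e] (m : M₀ ⟶ M₁) :
    HOrth e m := by
  intro Ce αe βe hTe _ _ _ _
  have hCe : IsZero Ce := Triangle.isZero₃_of_isIso₁ _ hTe (inferInstanceAs (IsIso e))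
  refine ⟨fun φ => ?_, fun φ ψ _ => hCe.eq_of_src φ ψ⟩
  rw [hCe.eq_of_tgt αe 0, zero_comp]

lemma HOrth.of_isIso_right {E₀ E₁ M₀ M₁ : D} (e : E₀ ⟶ E₁) (m : M₀ ⟶ M₁) [IsIso m] :
    HOrth e m := by
  intro _ _ _ _ Cm _ βm hTm
  have hCm : IsZero Cm := Triangle.isZero₃_of_isIso₁ _ hTm (inferInstanceAs (IsIso m))
  refine ⟨fun φ => ?_, fun φ ψ _ => hCm.eq_of_tgt φ ψ⟩
  rw [hCm.eq_of_src βm 0, Functor.map_zero, zero_comp, comp_zero, comp_zero]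

lemma isIso_of_hOrth_self {X Y : D} (f : X ⟶ Y) (hf : HOrth f f) : IsIso f := by
  obtain ⟨C, α, β, hT⟩ := distinguished_cocone_triangle f
  have hαβ : α ≫ β = 0 := comp_distTriang_mor_zero₂₃ _ hT
  have hid : 𝟙 C = 0 := (hf C α β hT C α β hT).2 (by simpa using hαβ)
  exact (Triangle.isZero₃_iff_isIso₁ _ hT).1 ((IsZero.iff_id_eq_zero C).2 hid)

lemma leftOrth_of_isIso (M : MorphismProperty D) {X Y : D} (f : X ⟶ Y) [IsIso f] :
    leftOrth M f :=
  fun _ _ m _ => HOrth.of_isIso_left f m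

lemma rightOrth_of_isIso (E : MorphismProperty D) {X Y : D} (f : X ⟶ Y) [IsIso f] :
    rightOrth E f :=
  fun _ _ e _ => HOrth.of_isIso_right e f

end HomotopyOrthogonality

section Statements

variable {D : Type u} [Category.{v} D] [HasZeroObject D] [Preadditive D]
  [HasShift D ℤ] [∀ n : ℤ, (shiftFunctor D n).Additive] [Pretriangulated D]

/-- For a triangulated pre-factorization system `(E, M)`, the intersection `E ∩ M` is
exactly the class of isomorphisms (Prop. 1.14(2)). -/
theorem triPFS_inter_eq_isos (E M : MorphismProperty D) (h : IsTriPFS E M)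
    {X Y : D} (f : X ⟶ Y) : (E f ∧ M f) ↔ IsIso f := by
  constructor
  · rintro ⟨hE, hM⟩
    have hf : leftOrth M f := h.left_eq ▸ hE
    exact isIso_of_hOrth_self f (hf f hM)
  · intro _
    exact ⟨h.left_eq ▸ leftOrth_of_isIso M f, h.right_eq ▸ rightOrth_of_isIso E f⟩

end Statements
end

section
/- Let D be a triangulated category with a t-structure t. The pair F_t = (E_t, M_t), where E_t = {φ : τ^{≥1}φ iso} and M_t = {φ : τ^{≤0}φ iso}, is a triangulated factorization system: E_t^⊥ = M_t, ^⊥M_t = E_t, E_t is closed under Σ, and every morphism factors as a morphism in E_t followed by a morphism in M_t. -/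
open CategoryTheory Category Limits Pretriangulated ZeroObject

universe v u w

/-!
Membership in `E_t` and `M_t` is detected on Hom-sets: `e ∈ E_t` iff `e` induces bijections
on maps into `D^{≥1}`, and `m ∈ M_t` iff `m` induces bijections on maps out of `D^{≤0}`
(restricted Yoneda, using the universal properties of `ρ` and `σ`). Through the long exact
Hom-sequences these become two vanishing conditions on the cone of the morphism, and homotopy
orthogonality to the morphisms `A ⟶ 0`, `0 ⟶ A` (`A ∈ D^{≤0}`), resp. `B ⟶ 0`, `0 ⟶ B`
(`B ∈ D^{≥1}`), says precisely these conditions; this gives both orthogonality equalities.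
A morphism `f : X ⟶ Y` factors through the extension `P` of `τ^{≥1}X` by `τ^{≤0}Y` classified
by `τ^{≥1}X ⟶ τ^{≥1}Y ⟶ (τ^{≤0}Y)⟦1⟧`: this triangle is a truncation triangle of `P`, so
`τ^{≤0}P ≅ τ^{≤0}Y` and `τ^{≥1}P ≅ τ^{≥1}X`.
-/

section RestrictedYoneda

variable {C : Type*} [Category C]

lemma isIso_iff_bijective_postcomp (P : C → Prop) {X Y : C} (φ : X ⟶ Y) (hX : P X)
    (hY : P Y) : IsIso φ ↔ ∀ W, P W → Function.Bijective (fun g : W ⟶ X => g ≫ φ) := by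
  refine ⟨fun _ _ _ => ⟨fun _ _ h => (cancel_mono φ).1 h, fun g => ⟨g ≫ inv φ, by simp⟩⟩,
    fun h => ?_⟩
  obtain ⟨ψ, hψ⟩ := (h Y hY).2 (𝟙 Y)
  exact ⟨ψ, (h X hX).1 (by simp only at hψ ⊢; rw [assoc, hψ, comp_id, id_comp]), hψ⟩

lemma isIso_iff_bijective_precomp (P : C → Prop) {X Y : C} (φ : X ⟶ Y) (hX : P X)
    (hY : P Y) : IsIso φ ↔ ∀ W, P W → Function.Bijective (fun g : Y ⟶ W => φ ≫ g) := by
  refine ⟨fun _ _ _ => ⟨fun _ _ h => (cancel_epi φ).1 h, fun g => ⟨inv φ ≫ g, by simp⟩⟩,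
    fun h => ?_⟩
  obtain ⟨ψ, hψ⟩ := (h X hX).2 (𝟙 X)
  exact ⟨ψ, hψ, (h Y hY).1 (by simp only at hψ ⊢; rw [← assoc, hψ, comp_id, id_comp])⟩

end RestrictedYoneda

namespace TData

variable {D : Type u} [Category.{v} D] [HasZeroObject D] [Preadditive D]
  [HasShift D ℤ] [∀ n : ℤ, (shiftFunctor D n).Additive] [Pretriangulated D] (t : TData D)

lemma shift_neg_one_mem_ge {B : D} (hB : B⟦(1:ℤ)⟧ ∈ t.ge) : B⟦(-1:ℤ)⟧⟦(1:ℤ)⟧ ∈ t.ge :=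
  t.ge_iso ((shiftFunctorCompIsoId D (-1:ℤ) (1:ℤ) (by omega)).app B).symm (t.shift_ge hB)

lemma bijective_comp_mor₁_of_distTriang {A X B W : D} {i : A ⟶ X} {p : X ⟶ B}
    {δ : B ⟶ A⟦(1:ℤ)⟧} (hT : Triangle.mk i p δ ∈ distTriang D) (hB : B⟦(1:ℤ)⟧ ∈ t.ge)
    (hW : W ∈ t.le) : Function.Bijective (fun g : W ⟶ A => g ≫ i) := by
  refine ⟨(injective_iff_map_eq_zero (Preadditive.rightComp W i)).2 fun g hg => ?_,
    fun f => ?_⟩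
  · have hg' : g⟦(1:ℤ)⟧' ≫ i⟦(1:ℤ)⟧' = 0 := by
      rw [← Functor.map_comp, show g ≫ i = 0 from hg, Functor.map_zero]
    obtain ⟨z, hz⟩ := Triangle.coyoneda_exact₁ _ hT _ hg'
    rw [t.hom_zero z (t.shift_le hW) hB, zero_comp] at hz
    exact (shiftFunctor D (1:ℤ)).map_injective (hz.trans (Functor.map_zero _ _ _).symm)
  · obtain ⟨g, hg⟩ := Triangle.coyoneda_exact₂ _ hT f (t.hom_zero _ hW hB)
    exact ⟨g, hg.symm⟩

lemma bijective_mor₂_comp_of_distTriang {A X B W : D} {i : A ⟶ X} {p : X ⟶ B}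
    {δ : B ⟶ A⟦(1:ℤ)⟧} (hT : Triangle.mk i p δ ∈ distTriang D) (hA : A ∈ t.le)
    (hW : W⟦(1:ℤ)⟧ ∈ t.ge) : Function.Bijective (fun g : B ⟶ W => p ≫ g) := by
  refine ⟨(injective_iff_map_eq_zero (Preadditive.leftComp W p)).2 fun g hg => ?_,
    fun f => ?_⟩
  · obtain ⟨z, rfl⟩ := Triangle.yoneda_exact₃ _ hT g hg
    rw [t.hom_zero z (t.shift_le hA) hW]
    exact comp_zero
  · obtain ⟨g, hg⟩ := Triangle.yoneda_exact₂ _ hT f (t.hom_zero _ hA hW)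
    exact ⟨g, hg.symm⟩

lemma exists_distTriang_σ_ρ (X : D) : ∃ δ : t.tge.obj X ⟶ (t.tle.obj X)⟦(1:ℤ)⟧,
    Triangle.mk (t.σ.app X) (t.ρ.app X) δ ∈ distTriang D := by
  obtain ⟨A, B, i, p, δ, hA, hB, hT⟩ := t.tri X
  obtain ⟨a, ha⟩ := (t.tle_univ hA X).2 i
  obtain ⟨b, hb⟩ := (t.tge_univ X hB).2 p
  simp only at ha hb
  have ha_iso : IsIso a := by
    refine (isIso_iff_bijective_postcomp (· ∈ t.le) a hA (t.tle_mem X)).2 fun W hW => ?_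
    have hcomp : (fun g : W ⟶ t.tle.obj X => g ≫ t.σ.app X) ∘ (fun g : W ⟶ A => g ≫ a) =
        fun g => g ≫ i := by
      funext g; simp [ha]
    rw [← (t.tle_univ hW X).of_comp_iff', hcomp]
    exact t.bijective_comp_mor₁_of_distTriang hT hB hW
  have hb_iso : IsIso b := by
    refine (isIso_iff_bijective_precomp (·⟦(1:ℤ)⟧ ∈ t.ge) b (t.tge_mem X) hB).2 fun W hW => ?_
    have hcomp : (fun g : t.tge.obj X ⟶ W => t.ρ.app X ≫ g) ∘ (fun g : B ⟶ W => b ≫ g) =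
        fun g => p ≫ g := by
      funext g; simp [← hb]
    rw [← (t.tge_univ X hW).of_comp_iff', hcomp]
    exact t.bijective_mor₂_comp_of_distTriang hT hA hW
  refine ⟨b ≫ δ ≫ a⟦(1:ℤ)⟧', isomorphic_distinguished _ hT _ ?_⟩
  refine Triangle.isoMk _ _ (asIso a).symm (Iso.refl X) (asIso b : t.tge.obj X ≅ B) ?_ ?_ ?_
  · dsimp [Triangle.mk]
    rw [← ha, IsIso.inv_hom_id_assoc, comp_id]
  · dsimp [Triangle.mk]
    rw [hb, id_comp]
  · dsimp [Triangle.mk]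
    rw [assoc, assoc, ← Functor.map_comp, IsIso.hom_inv_id, CategoryTheory.Functor.map_id, comp_id]

lemma et_iff_bijective_precomp {X Y : D} (e : X ⟶ Y) :
    Et t e ↔ ∀ B, B⟦(1:ℤ)⟧ ∈ t.ge → Function.Bijective (fun g : Y ⟶ B => e ≫ g) := by
  refine (isIso_iff_bijective_precomp (·⟦(1:ℤ)⟧ ∈ t.ge) _ (t.tge_mem X) (t.tge_mem Y)).trans
    (forall₂_congr fun B hB => ?_)
  have hsq : (fun g : t.tge.obj X ⟶ B => t.ρ.app X ≫ g) ∘ (fun g => t.tge.map e ≫ g) =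
      (fun g : Y ⟶ B => e ≫ g) ∘ (fun g => t.ρ.app Y ≫ g) := by
    funext g; simp [← t.ρ.naturality_assoc]
  rw [← (t.tge_univ X hB).of_comp_iff', hsq, Function.Bijective.of_comp_iff _ (t.tge_univ Y hB)]

lemma mt_iff_bijective_postcomp {X Y : D} (m : X ⟶ Y) :
    Mt t m ↔ ∀ A ∈ t.le, Function.Bijective (fun g : A ⟶ X => g ≫ m) := by
  refine (isIso_iff_bijective_postcomp (· ∈ t.le) _ (t.tle_mem X) (t.tle_mem Y)).trans
    (forall₂_congr fun A hA => ?_)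
  have hsq : (fun g : A ⟶ t.tle.obj Y => g ≫ t.σ.app Y) ∘ (fun g => g ≫ t.tle.map m) =
      (fun g : A ⟶ X => g ≫ m) ∘ (fun g => g ≫ t.σ.app X) := by
    funext g; simp [t.σ.naturality]
  rw [← (t.tle_univ hA Y).of_comp_iff', hsq, Function.Bijective.of_comp_iff _ (t.tle_univ hA X)]

lemma et_shift {X Y : D} {e : X ⟶ Y} (he : Et t e) : Et t (e⟦(1:ℤ)⟧') := by
  rw [et_iff_bijective_precomp] at he ⊢
  intro B hB
  let adj := (shiftEquiv D (1:ℤ)).toAdjunction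
  have hconj : (fun g : Y⟦(1:ℤ)⟧ ⟶ B => e⟦(1:ℤ)⟧' ≫ g) =
      (adj.homEquiv X B).symm ∘ (fun g => e ≫ g) ∘ adj.homEquiv Y B := by
    funext g
    change _ = (adj.homEquiv X B).symm (e ≫ adj.homEquiv Y B g)
    rw [adj.homEquiv_naturality_left_symm]
    exact congrArg _ ((adj.homEquiv Y B).symm_apply_apply g).symm
  rw [hconj]
  exact (adj.homEquiv X B).symm.bijective.comp
    ((he _ (t.shift_neg_one_mem_ge hB)).comp (adj.homEquiv Y B).bijective)

lemma et_of_forall_eq_zero {X Y : D} (f : X ⟶ Y)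
    (hX : ∀ B, B⟦(1:ℤ)⟧ ∈ t.ge → ∀ g : X ⟶ B, g = 0)
    (hY : ∀ B, B⟦(1:ℤ)⟧ ∈ t.ge → ∀ g : Y ⟶ B, g = 0) : Et t f :=
  (t.et_iff_bijective_precomp f).2 fun B hB => ⟨fun g g' _ => (hY B hB g).trans (hY B hB g').symm,
    fun g => ⟨0, (hX B hB _).trans (hX B hB g).symm⟩⟩

lemma mt_of_forall_eq_zero {X Y : D} (f : X ⟶ Y)
    (hX : ∀ A ∈ t.le, ∀ g : A ⟶ X, g = 0) (hY : ∀ A ∈ t.le, ∀ g : A ⟶ Y, g = 0) : Mt t f :=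
  (t.mt_iff_bijective_postcomp f).2 fun A hA => ⟨fun g g' _ => (hX A hA g).trans (hX A hA g').symm,
    fun g => ⟨0, (hY A hA _).trans (hY A hA g).symm⟩⟩

lemma mem_le_of_forall_eq_zero {X : D} (hX : ∀ B, B⟦(1:ℤ)⟧ ∈ t.ge → ∀ g : X ⟶ B, g = 0) :
    X ∈ t.le := by
  obtain ⟨δ, hT⟩ := t.exists_distTriang_σ_ρ X
  have hzero : IsZero (t.tge.obj X) := by
    rw [IsZero.iff_id_eq_zero]
    exact (t.tge_univ X (t.tge_mem X)).1 ((hX _ (t.tge_mem X) _).trans (hX _ (t.tge_mem X) _).symm)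
  have : IsIso (t.σ.app X) := (Triangle.isZero₃_iff_isIso₁ _ hT).1 hzero
  exact t.le_iso (asIso (t.σ.app X)) (t.tle_mem X)

lemma et_iff_of_distTriang {E₀ E₁ C : D} {e : E₀ ⟶ E₁} {α : E₁ ⟶ C} {β : C ⟶ E₀⟦(1:ℤ)⟧}
    (hT : Triangle.mk e α β ∈ distTriang D) :
    Et t e ↔ (∀ B, B⟦(1:ℤ)⟧ ∈ t.ge → ∀ h : C ⟶ B, h = 0) ∧
      (∀ B, B⟦(1:ℤ)⟧ ∈ t.ge → ∀ φ : C ⟶ B⟦(1:ℤ)⟧, α ≫ φ = 0 → φ = 0) := by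
  have h₁₂ : e ≫ α = 0 := comp_distTriang_mor_zero₁₂ _ hT
  have h₂₃ : α ≫ β = 0 := comp_distTriang_mor_zero₂₃ _ hT
  have h₃₁ : β ≫ e⟦(1:ℤ)⟧' = 0 := comp_distTriang_mor_zero₃₁ _ hT
  refine ⟨fun he => ⟨fun B hB h => ?_, fun B hB φ hφ => ?_⟩,
    fun ⟨h₁, h₂⟩ => (t.et_iff_bijective_precomp e).2 fun B hB => ?_⟩
  · have hαh : α ≫ h = 0 :=
      ((t.et_iff_bijective_precomp e).1 he B hB).1 (by simp [reassoc_of% h₁₂])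
    obtain ⟨k, hk⟩ := Triangle.yoneda_exact₃ _ hT h hαh
    obtain ⟨k', hk'⟩ := ((t.et_iff_bijective_precomp _).1 (t.et_shift he) B hB).2 k
    calc h = β ≫ e⟦(1:ℤ)⟧' ≫ k' := hk.trans (congrArg _ hk'.symm)
      _ = 0 := by rw [reassoc_of% h₃₁, zero_comp]
  · obtain ⟨k, hk⟩ := Triangle.yoneda_exact₃ _ hT φ hφ
    obtain ⟨g, rfl⟩ := (shiftFunctor D (1:ℤ)).map_surjective k
    obtain ⟨g', rfl⟩ := ((t.et_iff_bijective_precomp e).1 he B hB).2 g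
    calc φ = β ≫ (e ≫ g')⟦(1:ℤ)⟧' := hk
      _ = 0 := by rw [Functor.map_comp, reassoc_of% h₃₁, zero_comp]
  refine ⟨(injective_iff_map_eq_zero (Preadditive.leftComp B e)).2 fun g hg => ?_, fun f => ?_⟩
  · obtain ⟨h, rfl⟩ := Triangle.yoneda_exact₂ _ hT g hg
    rw [h₁ B hB h]
    exact comp_zero
  · have hβf : β ≫ f⟦(1:ℤ)⟧' = 0 := h₂ B hB _ (by rw [reassoc_of% h₂₃, zero_comp])
    obtain ⟨g, hg⟩ := Triangle.yoneda_exact₃ _ (rot_of_distTriang _ hT) _ hβf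
    dsimp [Triangle.rotate, Triangle.mk] at g hg
    obtain ⟨g₀, rfl⟩ := (shiftFunctor D (1:ℤ)).map_surjective g
    refine ⟨-g₀, (shiftFunctor D (1:ℤ)).map_injective ?_⟩
    simp [hg]

lemma mt_iff_of_distTriang {M₀ M₁ C : D} {m : M₀ ⟶ M₁} {α : M₁ ⟶ C} {β : C ⟶ M₀⟦(1:ℤ)⟧}
    (hT : Triangle.mk m α β ∈ distTriang D) :
    Mt t m ↔ (∀ A ∈ t.le, ∀ h : A⟦(1:ℤ)⟧ ⟶ C, h = 0) ∧
      (∀ A ∈ t.le, ∀ g : A ⟶ C, g ≫ β = 0 → g = 0) := by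
  have h₁₂ : m ≫ α = 0 := comp_distTriang_mor_zero₁₂ _ hT
  have h₂₃ : α ≫ β = 0 := comp_distTriang_mor_zero₂₃ _ hT
  have h₃₁ : β ≫ m⟦(1:ℤ)⟧' = 0 := comp_distTriang_mor_zero₃₁ _ hT
  rw [mt_iff_bijective_postcomp]
  refine ⟨fun hm => ?_, fun ⟨h₁, h₂⟩ A hA => ?_⟩
  · have h₂ : ∀ A ∈ t.le, ∀ g : A ⟶ C, g ≫ β = 0 → g = 0 := fun A hA g hg => by
      obtain ⟨ξ, hξ⟩ := Triangle.coyoneda_exact₃ _ hT g hg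
      obtain ⟨ξ₀, rfl⟩ := (hm A hA).2 ξ
      calc g = ξ₀ ≫ m ≫ α := hξ.trans (assoc _ _ _)
        _ = 0 := by rw [h₁₂, comp_zero]
    refine ⟨fun A hA h => h₂ _ (t.shift_le hA) h ?_, h₂⟩
    obtain ⟨v, hv⟩ := (shiftFunctor D (1:ℤ)).map_surjective (h ≫ β)
    have hvm : v ≫ m = 0 := (shiftFunctor D (1:ℤ)).map_injective (by
      rw [Functor.map_comp, hv, assoc, h₃₁, comp_zero, Functor.map_zero])
    have hv0 : v = 0 := (injective_iff_map_eq_zero (Preadditive.rightComp A m)).1 (hm A hA).1 v hvm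
    rw [← hv, hv0, Functor.map_zero]
  refine ⟨(injective_iff_map_eq_zero (Preadditive.rightComp A m)).2 fun g hg => ?_, fun f => ?_⟩
  · have hg' : g⟦(1:ℤ)⟧' ≫ m⟦(1:ℤ)⟧' = 0 := by
      rw [← Functor.map_comp, show g ≫ m = 0 from hg, Functor.map_zero]
    obtain ⟨z, hz⟩ := Triangle.coyoneda_exact₁ _ hT _ hg'
    dsimp [Triangle.mk] at z hz
    rw [h₁ A hA z, zero_comp] at hz
    exact (shiftFunctor D (1:ℤ)).map_injective (hz.trans (Functor.map_zero _ _ _).symm)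
  · obtain ⟨g, hg⟩ := Triangle.coyoneda_exact₂ _ hT f
      (h₂ A hA (f ≫ α) (by rw [assoc, h₂₃, comp_zero]))
    exact ⟨g, hg.symm⟩

lemma eq_zero_of_comp_shift_σ_eq_zero {C M : D} (hC : C ∈ t.le)
    {y : C ⟶ (t.tle.obj M)⟦(1:ℤ)⟧} (hy : y ≫ (t.σ.app M)⟦(1:ℤ)⟧' = 0) : y = 0 := by
  obtain ⟨δ, hT⟩ := t.exists_distTriang_σ_ρ M
  obtain ⟨z, hz⟩ := Triangle.coyoneda_exact₁ _ hT y hy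
  dsimp [Triangle.mk] at z hz
  rw [hz, t.hom_zero z hC (t.tge_mem M), zero_comp]

lemma eq_zero_of_comp_shift_ρ_eq_zero_of_mt {C M₀ M₁ : D} {m : M₀ ⟶ M₁} (hm : Mt t m)
    (hC : C ∈ t.le) {x : C ⟶ M₀⟦(1:ℤ)⟧} (hxρ : x ≫ (t.ρ.app M₀)⟦(1:ℤ)⟧' = 0)
    (hxm : x ≫ m⟦(1:ℤ)⟧' = 0) : x = 0 := by
  obtain ⟨δ, hT⟩ := t.exists_distTriang_σ_ρ M₀
  obtain ⟨y, hy⟩ := Triangle.coyoneda_exact₂ _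
    (rot_of_distTriang _ (rot_of_distTriang _ (rot_of_distTriang _ hT))) x
    (show x ≫ (-(t.ρ.app M₀)⟦(1:ℤ)⟧') = 0 by rw [Preadditive.comp_neg, hxρ, neg_zero])
  dsimp [Triangle.rotate, Triangle.mk] at y hy
  have : IsIso (t.tle.map m) := hm
  have hym : y ≫ (t.tle.map m)⟦(1:ℤ)⟧' = 0 := t.eq_zero_of_comp_shift_σ_eq_zero hC <| by
    have hσ : t.tle.map m ≫ t.σ.app M₁ = t.σ.app M₀ ≫ m := t.σ.naturality m
    have hyσ : y ≫ (t.σ.app M₀)⟦(1:ℤ)⟧' = -x := by rw [hy, Preadditive.comp_neg, neg_neg]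
    rw [assoc, ← Functor.map_comp, hσ, Functor.map_comp, ← assoc, hyσ, Preadditive.neg_comp,
      hxm, neg_zero]
  rw [hy, (Preadditive.IsIso.comp_right_eq_zero _ _).1 hym, zero_comp]

lemma hOrth_of_et_of_mt {E₀ E₁ M₀ M₁ : D} {e : E₀ ⟶ E₁} {m : M₀ ⟶ M₁} (he : Et t e)
    (hm : Mt t m) : HOrth e m := by
  intro Ce αe βe hTe Cm αm βm hTm
  obtain ⟨he₁, he₂⟩ := (t.et_iff_of_distTriang hTe).1 he
  obtain ⟨hm₁, hm₂⟩ := (t.mt_iff_of_distTriang hTm).1 hm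
  have hCe : Ce ∈ t.le := t.mem_le_of_forall_eq_zero he₁
  refine ⟨fun φ => ?_, fun ψ ψ' hψ => sub_eq_zero.1 (hm₂ Ce hCe _ ?_)⟩
  · have hφ : φ = 0 := (shiftFunctor D (1:ℤ)).map_injective <| by
      rw [Functor.map_zero, ← Preadditive.IsIso.comp_right_eq_zero _
        ((shiftFunctorCompIsoId D (-1:ℤ) (1:ℤ) (by omega)).hom.app Cm)]
      exact hm₁ Ce hCe _
    rw [hφ, zero_comp, comp_zero]
  · refine t.eq_zero_of_comp_shift_ρ_eq_zero_of_mt hm hCe (he₂ _ (t.tge_mem M₀) _ ?_) ?_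
    · have hψ' : αe ≫ (ψ - ψ') ≫ βm = 0 := by
        simp only at hψ
        rw [Preadditive.sub_comp, Preadditive.comp_sub, hψ, sub_self]
      rw [← assoc, hψ', zero_comp]
    · have h₃₁ : βm ≫ m⟦(1:ℤ)⟧' = 0 := comp_distTriang_mor_zero₃₁ _ hTm
      rw [assoc, h₃₁, comp_zero]

lemma rightOrth_et : rightOrth (Et t) = Mt t := by
  ext M₀ M₁ m
  refine ⟨fun hm => ?_, fun hm _ _ _ he => t.hOrth_of_et_of_mt he hm⟩
  obtain ⟨C, α, β, hT⟩ := distinguished_cocone_triangle m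
  refine (t.mt_iff_of_distTriang hT).2 ⟨fun A hA h => ?_, fun A hA g hg => ?_⟩
  · have he : Et t (0 : A ⟶ 0) := t.et_of_forall_eq_zero _
      (fun _ hB g => t.hom_zero g hA hB) fun _ _ _ => (isZero_zero D).eq_of_src _ _
    exact (hm _ he _ _ _ (contractible_distinguished₂ A) _ _ _ hT).2 (by simp)
  · have he : Et t (0 : 0 ⟶ A) := t.et_of_forall_eq_zero _
      (fun _ _ _ => (isZero_zero D).eq_of_src _ _) fun _ hB g => t.hom_zero g hA hB
    exact (hm _ he _ _ _ (contractible_distinguished₁ A) _ _ _ hT).2 (by simp [hg])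

lemma leftOrth_mt : leftOrth (Mt t) = Et t := by
  ext E₀ E₁ e
  refine ⟨fun he => ?_, fun he _ _ _ hm => t.hOrth_of_et_of_mt he hm⟩
  obtain ⟨C, α, β, hT⟩ := distinguished_cocone_triangle e
  refine (t.et_iff_of_distTriang hT).2 ⟨fun B hB h => ?_, fun B hB φ hφ => ?_⟩
  · have hm : Mt t (0 : 0 ⟶ B) := t.mt_of_forall_eq_zero _
      (fun _ _ _ => (isZero_zero D).eq_of_tgt _ _) fun _ hA g => t.hom_zero g hA hB
    exact (he _ hm _ _ _ hT _ _ _ (contractible_distinguished₁ B)).2 (by simp)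
  · have hm : Mt t (0 : B ⟶ 0) := t.mt_of_forall_eq_zero _
      (fun _ hA g => t.hom_zero g hA hB) fun _ _ _ => (isZero_zero D).eq_of_tgt _ _
    exact (he _ hm _ _ _ hT _ _ _ (contractible_distinguished₂ B)).2 (by simp [hφ])

lemma mt_of_distTriang_of_comp_eq_σ {Y P B : D} {i : t.tle.obj Y ⟶ P} {p : P ⟶ B}
    {w : B ⟶ (t.tle.obj Y)⟦(1:ℤ)⟧} (hT : Triangle.mk i p w ∈ distTriang D)
    (hB : B⟦(1:ℤ)⟧ ∈ t.ge) {m : P ⟶ Y} (hm : i ≫ m = t.σ.app Y) : Mt t m := by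
  refine (t.mt_iff_bijective_postcomp m).2 fun W hW => ?_
  have hcomp : (fun g : W ⟶ P => g ≫ m) ∘ (fun g => g ≫ i) = fun g => g ≫ t.σ.app Y := by
    funext g; simp [hm]
  rw [← Function.Bijective.of_comp_iff _ (t.bijective_comp_mor₁_of_distTriang hT hB hW), hcomp]
  exact t.tle_univ hW Y

lemma et_of_distTriang_of_comp_eq_ρ {X A P : D} {i : A ⟶ P} {p : P ⟶ t.tge.obj X}
    {w : t.tge.obj X ⟶ A⟦(1:ℤ)⟧} (hT : Triangle.mk i p w ∈ distTriang D) (hA : A ∈ t.le)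
    {e : X ⟶ P} (he : e ≫ p = t.ρ.app X) : Et t e := by
  refine (t.et_iff_bijective_precomp e).2 fun W hW => ?_
  have hcomp : (fun g : P ⟶ W => e ≫ g) ∘ (fun g => p ≫ g) = fun g => t.ρ.app X ≫ g := by
    funext g; simp [← he]
  rw [← Function.Bijective.of_comp_iff _ (t.bijective_mor₂_comp_of_distTriang hT hA hW), hcomp]
  exact t.tge_univ X hW

lemma exists_et_mt_factorization {X Y : D} (f : X ⟶ Y) :
    ∃ (P : D) (e : X ⟶ P) (m : P ⟶ Y), Et t e ∧ Mt t m ∧ e ≫ m = f := by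
  obtain ⟨δ, hY⟩ := t.exists_distTriang_σ_ρ Y
  obtain ⟨P, i, p, hP⟩ := distinguished_cocone_triangle₂ (t.tge.map f ≫ δ)
  obtain ⟨m, him, hpm⟩ := complete_distinguished_triangle_morphism₂ _ _ hP hY (𝟙 _)
    (t.tge.map f) (by dsimp [Triangle.mk]; simp)
  dsimp [Triangle.mk] at m him hpm
  have hρf : f ≫ t.ρ.app Y = t.ρ.app X ≫ t.tge.map f := t.ρ.naturality f
  have hρδ : t.ρ.app Y ≫ δ = 0 := comp_distTriang_mor_zero₂₃ _ hY
  obtain ⟨e₀, he₀⟩ := Triangle.coyoneda_exact₃ _ hP (t.ρ.app X)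
    (show t.ρ.app X ≫ t.tge.map f ≫ δ = 0 by
      rw [← assoc, ← hρf, assoc, hρδ, comp_zero])
  dsimp [Triangle.mk] at e₀ he₀
  obtain ⟨k, hk⟩ := Triangle.coyoneda_exact₂ _ hY (e₀ ≫ m - f)
    (show (e₀ ≫ m - f) ≫ t.ρ.app Y = 0 by
      rw [Preadditive.sub_comp, assoc, ← hpm, ← assoc, ← he₀, hρf, sub_self])
  dsimp [Triangle.mk] at k hk
  have hip : i ≫ p = 0 := comp_distTriang_mor_zero₁₂ _ hP
  -- `e₀` lifts `ρ_X` through `p`; correcting it by `k ≫ i` keeps this and makes `e ≫ m = f`.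
  refine ⟨P, e₀ - k ≫ i, m, t.et_of_distTriang_of_comp_eq_ρ hP (t.tle_mem Y) ?_,
    t.mt_of_distTriang_of_comp_eq_σ hP (t.tge_mem X) (him.trans (id_comp _)), ?_⟩
  · rw [Preadditive.sub_comp, assoc, hip, comp_zero, sub_zero, he₀]
  · rw [Preadditive.sub_comp, assoc, him, id_comp, ← hk, sub_sub_cancel]

end TData

section Statements

variable {D : Type u} [Category.{v} D] [HasZeroObject D] [Preadditive D]
  [HasShift D ℤ] [∀ n : ℤ, (shiftFunctor D n).Additive] [Pretriangulated D]

/-- Proposition 2.8: the pair `(E_t, M_t)` is a triangulated factorization system. -/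
theorem Ft_is_triangulated_FS (t : TData D) : IsTriFS (Et t) (Mt t) :=
  ⟨⟨t.rightOrth_et, t.leftOrth_mt, fun _ _ _ => t.et_shift⟩,
    fun _ _ => t.exists_et_mt_factorization⟩

end Statements
end
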